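/- Let (G, L, c, r, e_r) be a rooted WRAP instance, F⃗ a non-shortenable directed WRAP solution, and K ⊆ L. Then a directed link (u, v) ∈ F⃗ is contained in Drop_{F⃗}(K) if and only if v is connected to a v-good vertex in the link intersection graph H[K]. -/

import Mathlib

/-!
Common definitions for the Weighted Ring Augmentation Problem (WRAP).

A rooted WRAP instance `(G, L, c, r, e_r)` has a ring graph `G` whose
vertices we identify with `Fin n`, numbered `r = 0, 1, …, n-1` in the order
in which they appear along the path `(V, E \ {e_r})` starting at the root
`r = 0`.  Vertex `i` is to the left of `j` iff `i < j`.
-/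

/-- An undirected link: an unordered pair of distinct vertices of the ring,
recorded via its left endpoint `lo` and its right endpoint `hi`. -/
structure Link (n : ℕ) where
  lo : Fin n
  hi : Fin n
  lo_lt_hi : lo < hi

instance {n : ℕ} : DecidableEq (Link n) := fun a b =>
  decidable_of_iff (a.lo = b.lo ∧ a.hi = b.hi) (by cases a; cases b; simp)

/-- A directed link: an ordered pair of distinct vertices. -/
structure DLink (n : ℕ) where
  tail : Fin n
  head : Fin n
  ne : tail ≠ head

instance {n : ℕ} : DecidableEq (DLink n) := fun a b =>
  decidable_of_iff (a.tail = b.tail ∧ a.head = b.head) (by cases a; cases b; simp)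

variable {n : ℕ}

/-- The underlying undirected link of a directed link. -/
def DLink.toLink (d : DLink n) : Link n :=
  ⟨min d.tail d.head, max d.tail d.head, min_lt_max.mpr d.ne⟩

/-- `ℓ` is incident to `v`. -/
def Link.Incident (ℓ : Link n) (v : Fin n) : Prop := ℓ.lo = v ∨ ℓ.hi = v

/-- The 2-cuts `C_G` of the ring: the nonempty intervals of consecutive
vertices along the path `(V, E \ {e_r})` that do not contain the root `0`. -/
def IsCut [NeZero n] (C : Finset (Fin n)) : Prop :=
  ∃ a b : Fin n, 0 < a ∧ a ≤ b ∧ C = Finset.Icc a b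

/-- `ℓ` has exactly one endpoint in `C`. -/
def crossesCut (ℓ : Link n) (C : Finset (Fin n)) : Prop :=
  (ℓ.lo ∈ C ∧ ℓ.hi ∉ C) ∨ (ℓ.lo ∉ C ∧ ℓ.hi ∈ C)

instance (ℓ : Link n) (C : Finset (Fin n)) : Decidable (crossesCut ℓ C) := by
  unfold crossesCut; infer_instance

/-- `δ_K(C)`: the links of `K` with exactly one endpoint in `C`. -/
def cutLinks (K : Finset (Link n)) (C : Finset (Fin n)) : Finset (Link n) :=
  K.filter (fun ℓ => crossesCut ℓ C)

/-- An (undirected) WRAP solution: every 2-cut is covered by some link. -/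
def IsSolution [NeZero n] (S : Finset (Link n)) : Prop :=
  ∀ C : Finset (Fin n), IsCut C → (cutLinks S C).Nonempty

/-- A directed link covers a 2-cut if it enters it. -/
def DCovers (d : DLink n) (C : Finset (Fin n)) : Prop := d.tail ∉ C ∧ d.head ∈ C

/-- A directed WRAP solution: every 2-cut is entered by some directed link. -/
def IsDirSolution [NeZero n] (F : Finset (DLink n)) : Prop :=
  ∀ C : Finset (Fin n), IsCut C → ∃ d ∈ F, DCovers d C

/-- `d'` is a shortening of `d`: same head, and the tail of `d'` lies on the
unique path between the endpoints of `d` in `(V, E \ {e_r})`. -/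
def IsShortening (d' d : DLink n) : Prop :=
  d'.head = d.head ∧ min d.tail d.head ≤ d'.tail ∧ d'.tail ≤ max d.tail d.head

/-- A non-shortenable directed WRAP solution: deleting any link, or replacing
any link by a strict shortening of it, destroys feasibility. -/
def NonShortenable [NeZero n] (F : Finset (DLink n)) : Prop :=
  IsDirSolution F ∧
    (∀ d ∈ F, ¬ IsDirSolution (F.erase d)) ∧
    (∀ d ∈ F, ∀ d' : DLink n, IsShortening d' d → d' ≠ d →
      ¬ IsDirSolution (insert d' (F.erase d)))

/-- `d` is a shadow of the undirected link `ℓ`: a shortening of one of the two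
orientations of `ℓ`. -/
def IsShadow (d : DLink n) (ℓ : Link n) : Prop :=
  (d.head = ℓ.lo ∨ d.head = ℓ.hi) ∧ ℓ.lo ≤ d.tail ∧ d.tail ≤ ℓ.hi

/-- `u` is a descendant of `v` in `(V, F)` (every vertex is a descendant of
itself). -/
def Descend (F : Finset (DLink n)) (v u : Fin n) : Prop :=
  Relation.ReflTransGen (fun a b => ∃ d ∈ F, d.tail = a ∧ d.head = b) v u

/-- `u` is `v`-good: not a descendant of `v` in `(V, F)`. -/
def VGood (F : Finset (DLink n)) (v u : Fin n) : Prop := ¬ Descend F v u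

/-- `w` is the least common ancestor of the vertex set `U` in `(V, F)`. -/
def IsLCA (F : Finset (DLink n)) (w : Fin n) (U : Set (Fin n)) : Prop :=
  (∀ u ∈ U, Descend F w u) ∧ ∀ x : Fin n, (∀ u ∈ U, Descend F x u) → Descend F x w

/-- `d = (u,v)` is responsible for the 2-cut `C`: it covers `C` and no
directed link of `F` on the `r`–`u` path in the arborescence `(V, F)`
(i.e. no link of `F` whose head is an ancestor of `u`) covers `C`. -/
def Responsible [NeZero n] (F : Finset (DLink n)) (d : DLink n)
    (C : Finset (Fin n)) : Prop :=
  IsCut C ∧ DCovers d C ∧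
    ∀ d' ∈ F, Descend F d'.head d.tail → ¬ DCovers d' C

/-- `Drop_F(K)`: directed links of `F` all of whose responsible cuts
are covered by `K`. -/
def Drop [NeZero n] (F : Finset (DLink n)) (K : Finset (Link n)) : Set (DLink n) :=
  {d | d ∈ F ∧ ∀ C : Finset (Fin n), Responsible F d C → (cutLinks K C).Nonempty}

/-- Two links are crossing: their endpoints interleave along the ring. -/
def Crossing (ℓ f : Link n) : Prop :=
  (ℓ.lo < f.lo ∧ f.lo < ℓ.hi ∧ ℓ.hi < f.hi) ∨
  (f.lo < ℓ.lo ∧ ℓ.lo < f.hi ∧ f.hi < ℓ.hi)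

/-- Two links intersect: they share an endpoint or cross. -/
def Intersects (ℓ f : Link n) : Prop :=
  (ℓ.lo = f.lo ∨ ℓ.lo = f.hi ∨ ℓ.hi = f.lo ∨ ℓ.hi = f.hi) ∨ Crossing ℓ f

/-- The vertex `u` is connected to the vertex `w` in the link intersection
graph `H[K]`: there is a path in `H[K]` from a link incident to `u` to a link
incident to `w`. -/
def ConnVert (K : Finset (Link n)) (u w : Fin n) : Prop :=
  ∃ ℓ ∈ K, ∃ f ∈ K, ℓ.Incident u ∧ f.Incident w ∧
    Relation.ReflTransGen (fun a b => a ∈ K ∧ b ∈ K ∧ Intersects a b) ℓ f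

/-- The link intersection graph `H[S]` is connected. -/
def ConnLinkSet (S : Finset (Link n)) : Prop :=
  ∀ ℓ ∈ S, ∀ f ∈ S,
    Relation.ReflTransGen (fun a b => a ∈ S ∧ b ∈ S ∧ Intersects a b) ℓ f

/-- `V(S)`: the vertices incident to a link of `S`. -/
def linkVerts (S : Finset (Link n)) : Set (Fin n) := {v | ∃ ℓ ∈ S, ℓ.Incident v}

/-- A festoon order: the links (listed as `f 0, f 1, …`) form a path in the
link intersection graph visited in this order, with both left endpoints and
right endpoints strictly increasing. -/
def IsFestoonSeq {p : ℕ} (f : Fin p → Link n) : Prop :=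
  (∀ i j : Fin p, i < j → (f i).lo < (f j).lo ∧ (f i).hi < (f j).hi) ∧
  (∀ i j : Fin p, (i : ℕ) + 1 = (j : ℕ) → Intersects (f i) (f j)) ∧
  (∀ i j : Fin p, (i : ℕ) + 1 < (j : ℕ) → ¬ Intersects (f i) (f j))

/-- A festoon: a nonempty link set admitting a festoon order. -/
def IsFestoon (X : Finset (Link n)) : Prop :=
  ∃ p : ℕ, 0 < p ∧ ∃ f : Fin p → Link n,
    IsFestoonSeq f ∧ X = Finset.image f Finset.univ

/-- The festoon interval `I_X`: the interval from the leftmost endpoint of a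
link of `X` to the rightmost endpoint of a link of `X`. -/
def festoonIval (X : Finset (Link n)) : Set (Fin n) :=
  {w | (∃ ℓ ∈ X, ℓ.lo ≤ w) ∧ ∃ ℓ ∈ X, w ≤ ℓ.hi}

/-- Two festoons are tangled: some link of one intersects some link of the
other. -/
def Tangled (X Y : Finset (Link n)) : Prop :=
  ∃ ℓ ∈ X, ∃ f ∈ Y, Intersects ℓ f

/-- A laminar family of vertex sets: any two members are nested or disjoint. -/
def Laminar (𝓛 : Set (Finset (Fin n))) : Prop :=
  ∀ A ∈ 𝓛, ∀ B ∈ 𝓛, A ⊆ B ∨ B ⊆ A ∨ Disjoint A B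

/-- An inclusion-wise maximal laminar subfamily of `C_G`. -/
def MaxLaminarCuts [NeZero n] (𝓛 : Set (Finset (Fin n))) : Prop :=
  (∀ C ∈ 𝓛, IsCut C) ∧ Laminar 𝓛 ∧
    ∀ C : Finset (Fin n), IsCut C → C ∉ 𝓛 → ¬ Laminar (insert C 𝓛)

/-- An `α`-thin link set. -/
def IsThin [NeZero n] (α : ℕ) (K : Finset (Link n)) : Prop :=
  ∃ 𝓛 : Set (Finset (Fin n)), MaxLaminarCuts 𝓛 ∧ ∀ C ∈ 𝓛, (cutLinks K C).card ≤ α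

/-- The set `𝒳` of festoons connects `v` to a `v`-good vertex. -/
def ConnectsToGood (F : Finset (DLink n)) (v : Fin n)
    (𝒳 : Finset (Finset (Link n))) : Prop :=
  ∃ w : Fin n, VGood F v w ∧ ConnVert (𝒳.biUnion id) v w

/-- The undirected graph obtained from a set of directed links by
disregarding orientations. -/
def undirGraph (F : Finset (DLink n)) : SimpleGraph (Fin n) where
  Adj a b := ∃ d ∈ F, (d.tail = a ∧ d.head = b) ∨ (d.tail = b ∧ d.head = a)
  symm := by
    constructor
    rintro a b ⟨d, hd, h⟩
    exact ⟨d, hd, h.symm⟩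
  loopless := by
    constructor
    rintro a ⟨d, hd, h⟩
    rcases h with ⟨h1, h2⟩ | ⟨h1, h2⟩ <;> exact d.ne (h1.trans h2.symm)

/-- A directed link going to the left along the ring. -/
def LeftGoing (d : DLink n) : Prop := d.head < d.tail

/-- A directed link going to the right along the ring. -/
def RightGoing (d : DLink n) : Prop := d.tail < d.head

/-!
In a non-shortenable solution every link `g = (t, h)` is the only link entering some 2-cut
that contains all vertices of the path from `h` towards `t` except `t` itself: delete `g`, or
shorten it to start at that vertex. So a root path to any such vertex must use `g`, and all of
them are descendants of `h`. From this: every vertex has in-degree one and is reached from the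
root, there are no cycles, the descendants `D(v)` of a vertex form an interval, and the
subtrees of two children of `p` lie on opposite sides of `p`. It follows that `(u, v)` is
responsible for exactly the cuts `C` with `v ∈ C ⊆ D(v)`.

If all vertices connected to `v` in `H[K]` are descendants of `v`, the smallest interval
containing them is such a cut; the spans of a connected set of links cover an interval, so a
link of `K` crossing this cut would intersect one of them and be connected to `v` as well.
Conversely, a path in `H[K]` from `v` to a `v`-good vertex leaves every cut `v ∈ C ⊆ D(v)`,
so some link of `K` crosses it.
-/

theorem IsCut.zero_notMem [NeZero n] {C : Finset (Fin n)} (hC : IsCut C) : (0 : Fin n) ∉ C := by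
  obtain ⟨a, b, ha, -, rfl⟩ := hC
  exact fun h => (Finset.mem_Icc.1 h).1.not_gt ha

def CoveredOnlyBy (F : Finset (DLink n)) (C : Finset (Fin n)) (g : DLink n) : Prop :=
  ∀ g' ∈ F, DCovers g' C → g' = g

namespace Descend

open Relation

variable {F : Finset (DLink n)} {a b x : Fin n}

theorem of_mem {d : DLink n} (hd : d ∈ F) : Descend F d.tail d.head :=
  ReflTransGen.single ⟨d, hd, rfl, rfl⟩

theorem refl (a : Fin n) : Descend F a a := ReflTransGen.refl

theorem trans (h₁ : Descend F a b) (h₂ : Descend F b x) : Descend F a x :=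
  ReflTransGen.trans h₁ h₂

theorem exists_entering (P : Fin n → Prop) (h : Descend F a x) (ha : ¬ P a) (hx : P x) :
    ∃ g ∈ F, ¬ P g.tail ∧ P g.head ∧ Descend F a g.tail ∧ Descend F g.head x := by
  induction h with
  | refl => exact absurd hx ha
  | @tail b c hab hbc ih =>
    obtain ⟨e, he, rfl, rfl⟩ := hbc
    by_cases hb : P e.tail
    · obtain ⟨g, hg, hgt, hgh, hag, hgb⟩ := ih hb
      exact ⟨g, hg, hgt, hgh, hag, hgb.tail ⟨e, he, rfl, rfl⟩⟩
    · exact ⟨e, he, hb, hx, hab, ReflTransGen.refl⟩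

theorem exists_last (h : Descend F a x) (hne : a ≠ x) :
    ∃ g ∈ F, g.head = x ∧ Descend F a g.tail := by
  obtain ⟨g, hg, -, hgx, hag, -⟩ := h.exists_entering (· = x) hne rfl
  exact ⟨g, hg, hgx, hag⟩

theorem exists_first (h : Descend F a x) (hne : a ≠ x) :
    ∃ g ∈ F, g.tail = a ∧ Descend F g.head x := by
  obtain ⟨g, hg, hga, -, -, hgx⟩ := h.exists_entering (· ≠ a) (not_not.2 rfl) hne.symm
  exact ⟨g, hg, not_not.1 hga, hgx⟩

theorem through_of_coveredOnlyBy {C : Finset (Fin n)} {g : DLink n} (hg : CoveredOnlyBy F C g)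
    (h : Descend F a x) (ha : a ∉ C) (hx : x ∈ C) :
    Descend F a g.tail ∧ Descend F g.head x := by
  obtain ⟨g', hg', ht, hh, hat, hhx⟩ := h.exists_entering (· ∈ C) ha hx
  obtain rfl := hg g' hg' ⟨ht, hh⟩
  exact ⟨hat, hhx⟩

end Descend

namespace NonShortenable

variable [NeZero n] {F : Finset (DLink n)} {g e e₁ e₂ : DLink n} {a v x y : Fin n}

theorem exists_cut_coveredOnlyBy (hF : NonShortenable F) (hg : g ∈ F) :
    ∃ C, IsCut C ∧ DCovers g C ∧ CoveredOnlyBy F C g := by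
  obtain ⟨C, hC, hno⟩ : ∃ C, IsCut C ∧ ∀ g' ∈ F.erase g, ¬ DCovers g' C := by
    simpa [IsDirSolution] using hF.2.1 g hg
  have hon : CoveredOnlyBy F C g := fun g' hg' hcov =>
    by_contra fun hne => hno g' (Finset.mem_erase.2 ⟨hne, hg'⟩) hcov
  obtain ⟨g', hg', hcov⟩ := hF.1 C hC
  exact ⟨C, hC, hon g' hg' hcov ▸ hcov, hon⟩

theorem exists_cut_coveredOnlyBy_of_mem_uIcc (hF : NonShortenable F) (hg : g ∈ F)
    (hy : y ∈ Set.uIcc g.tail g.head) (hyt : y ≠ g.tail) :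
    ∃ C, IsCut C ∧ y ∈ C ∧ CoveredOnlyBy F C g := by
  by_cases hyh : y = g.head
  · obtain ⟨C, hC, hcov, hon⟩ := hF.exists_cut_coveredOnlyBy hg
    exact ⟨C, hC, hyh ▸ hcov.2, hon⟩
  let g₀ : DLink n := ⟨y, g.head, hyh⟩
  have hne : g₀ ≠ g := fun h => hyt (congrArg DLink.tail h)
  obtain ⟨C, hC, hno⟩ : ∃ C, IsCut C ∧ ∀ g' ∈ insert g₀ (F.erase g), ¬ DCovers g' C := by
    simpa [IsDirSolution] using hF.2.2 g hg g₀ ⟨rfl, hy⟩ hne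
  have hon : CoveredOnlyBy F C g := fun g' hg' hcov =>
    by_contra fun hne => hno g' (Finset.mem_insert_of_mem (Finset.mem_erase.2 ⟨hne, hg'⟩)) hcov
  obtain ⟨g', hg', hcov⟩ := hF.1 C hC
  have hhead : g.head ∈ C := (hon g' hg' hcov ▸ hcov).2
  exact ⟨C, hC, by_contra fun hyC => hno g₀ (Finset.mem_insert_self _ _) ⟨hyC, hhead⟩, hon⟩

theorem head_ne_zero (hF : NonShortenable F) (hg : g ∈ F) : g.head ≠ 0 := by
  obtain ⟨C, hC, hcov, -⟩ := hF.exists_cut_coveredOnlyBy hg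
  exact fun h => hC.zero_notMem (h ▸ hcov.2)

theorem eq_zero_of_descend_zero (hF : NonShortenable F) (h : Descend F v 0) : v = 0 := by
  by_contra hv
  obtain ⟨g, hg, hg0, -⟩ := h.exists_last hv
  exact hF.head_ne_zero hg hg0

/-- The cuts entered only by `e₁`, resp. `e₂`, both contain the common head, so their union is a
cut; the link entering the union enters one of them, yet has its tail outside both. -/
theorem eq_of_head_eq (hF : NonShortenable F) (h₁ : e₁ ∈ F) (h₂ : e₂ ∈ F)
    (hh : e₁.head = e₂.head) : e₁ = e₂ := by
  by_contra hne
  obtain ⟨C₁, ⟨a₁, b₁, ha₁, -, rfl⟩, hcov₁, only₁⟩ := hF.exists_cut_coveredOnlyBy h₁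
  obtain ⟨C₂, ⟨a₂, b₂, ha₂, -, rfl⟩, hcov₂, only₂⟩ := hF.exists_cut_coveredOnlyBy h₂
  have ht₂ : e₂.tail ∈ Finset.Icc a₁ b₁ :=
    by_contra fun h => hne (only₁ e₂ h₂ ⟨h, hh ▸ hcov₁.2⟩).symm
  have ht₁ : e₁.tail ∈ Finset.Icc a₂ b₂ :=
    by_contra fun h => hne (only₂ e₁ h₁ ⟨h, hh ▸ hcov₂.2⟩)
  have hsub₁ : Finset.Icc a₁ b₁ ⊆ Finset.Icc (min a₁ a₂) (max b₁ b₂) :=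
    Finset.Icc_subset_Icc (min_le_left _ _) (le_max_left _ _)
  have hsub₂ : Finset.Icc a₂ b₂ ⊆ Finset.Icc (min a₁ a₂) (max b₁ b₂) :=
    Finset.Icc_subset_Icc (min_le_right _ _) (le_max_right _ _)
  have hv₁ := Finset.mem_Icc.1 hcov₁.2
  have hv₂ := Finset.mem_Icc.1 hcov₂.2
  obtain ⟨g, hg, hgt, hgh⟩ := hF.1 (Finset.Icc (min a₁ a₂) (max b₁ b₂))
    ⟨_, _, lt_min ha₁ ha₂, (min_le_left _ _).trans (hv₁.1.trans (hv₁.2.trans (le_max_left _ _))),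
      rfl⟩
  by_cases hg₁ : g.head ∈ Finset.Icc a₁ b₁
  · obtain rfl := only₁ g hg ⟨fun h => hgt (hsub₁ h), hg₁⟩
    exact hgt (hsub₂ ht₁)
  · have hg₂ : g.head ∈ Finset.Icc a₂ b₂ := by
      simp only [Finset.mem_Icc, min_le_iff, le_max_iff] at hg₁ hgh ⊢
      omega
    obtain rfl := only₂ g hg ⟨fun h => hgt (hsub₂ h), hg₂⟩
    exact hgt (hsub₁ ht₂)

theorem descend_tail_of_descend_head (hF : NonShortenable F) (he : e ∈ F)
    (h : Descend F a e.head) (hne : a ≠ e.head) : Descend F a e.tail := by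
  obtain ⟨g, hg, hgh, hag⟩ := h.exists_last hne
  rwa [hF.eq_of_head_eq hg he hgh] at hag

/-- Let `[α, β]` be a maximal interval of vertices unreachable from the root, `α` the leftmost
such vertex. The tail of the link entering `[α, β]` lies beyond `β + 1`, which is reachable;
but every root path to `β + 1` passes through that link. -/
theorem descend_zero (hF : NonShortenable F) (v : Fin n) : Descend F 0 v := by
  classical
  by_contra hv
  set W := Finset.univ.filter (fun x => ¬ Descend F 0 x)
  have hW : ∀ x, x ∈ W ↔ ¬ Descend F 0 x := by simp [W]
  have hWne : W.Nonempty := ⟨v, (hW v).2 hv⟩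
  set α := W.min' hWne
  set B := Finset.univ.filter (fun b => Finset.Icc α b ⊆ W)
  have hB : ∀ b, b ∈ B ↔ Finset.Icc α b ⊆ W := by simp [B]
  have hαB : α ∈ B := (hB α).2 (by
    rw [Finset.Icc_self, Finset.singleton_subset_iff]
    exact W.min'_mem hWne)
  set β := B.max' ⟨α, hαB⟩
  have hsub : Finset.Icc α β ⊆ W := (hB β).1 (B.max'_mem _)
  have hα : α ≠ 0 := fun h => (hW α).1 (W.min'_mem hWne) (by rw [h]; exact .refl 0)
  obtain ⟨e, he, het, heh⟩ := hF.1 _ ⟨α, β, (Fin.pos_iff_ne_zero' α).2 hα, B.le_max' α hαB, rfl⟩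
  have hetW : e.tail ∈ W := (hW _).2 fun h => (hW _).1 (hsub heh) (h.trans (.of_mem he))
  have hαt : α ≤ e.tail := W.min'_le _ hetW
  have hβt : β < e.tail := by simp only [Finset.mem_Icc] at het heh; omega
  let y : Fin n := ⟨β + 1, by omega⟩
  have hyv : (y : ℕ) = β + 1 := rfl
  have hyW : y ∉ W := fun hyW => by
    have : y ≤ β := B.le_max' y ((hB y).2 fun z hz => by
      by_cases hzβ : z ≤ β
      · exact hsub (Finset.mem_Icc.2 ⟨(Finset.mem_Icc.1 hz).1, hzβ⟩)
      · have : z = y := by simp only [Finset.mem_Icc, Fin.le_def, Fin.ext_iff] at hz hzβ ⊢; omega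
        exact this ▸ hyW)
    simp only [Fin.le_def] at this; omega
  obtain ⟨C, hC, hyC, hon⟩ := hF.exists_cut_coveredOnlyBy_of_mem_uIcc he (y := y)
    (by simp only [Set.mem_uIcc, Finset.mem_Icc, Fin.le_def] at heh ⊢; omega)
    (fun h => hyW (h ▸ hetW))
  have h0y : Descend F 0 y := by simpa [hW] using hyW
  exact (hW _).1 hetW (h0y.through_of_coveredOnlyBy hon hC.zero_notMem hyC).1

/-- A root path to `e.head` enters the cycle through `e` by some link `g`; but `g.head` lies on
the cycle, so its unique in-link, `g` itself, comes from the cycle. -/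
theorem not_descend_tail (hF : NonShortenable F) (he : e ∈ F) : ¬ Descend F e.head e.tail := by
  intro hcyc
  obtain ⟨g, hg, hgt, ⟨hg₁, hg₂⟩, -, -⟩ := (hF.descend_zero e.head).exists_entering
    (fun z => Descend F e.head z ∧ Descend F z e.head)
    (fun h => hF.head_ne_zero he (hF.eq_zero_of_descend_zero h.1)) ⟨.refl _, .refl _⟩
  apply hgt
  by_cases hh : g.head = e.head
  · rw [hF.eq_of_head_eq hg he hh]
    exact ⟨hcyc, .of_mem he⟩
  · exact ⟨(hF.descend_tail_of_descend_head hg hg₁ (Ne.symm hh)), (Descend.of_mem hg).trans hg₂⟩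

theorem head_eq_of_descend_head (hF : NonShortenable F) (h₁ : e₁ ∈ F) (h₂ : e₂ ∈ F)
    (ht : e₁.tail = e₂.tail) (h : Descend F e₁.head e₂.head) : e₁.head = e₂.head :=
  by_contra fun hne => hF.not_descend_tail h₁ (ht ▸ hF.descend_tail_of_descend_head h₂ h hne)

theorem head_descend_of_mem_uIcc (hF : NonShortenable F) (hg : g ∈ F)
    (hy : y ∈ Set.uIcc g.tail g.head) (hyt : y ≠ g.tail) : Descend F g.head y := by
  obtain ⟨C, hC, hyC, hon⟩ := hF.exists_cut_coveredOnlyBy_of_mem_uIcc hg hy hyt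
  exact ((hF.descend_zero y).through_of_coveredOnlyBy hon hC.zero_notMem hyC).2

theorem descend_of_mem_uIcc (hF : NonShortenable F) (h : Descend F v x)
    (hy : y ∈ Set.uIcc v x) : Descend F v y := by
  induction h with
  | refl =>
    rw [Set.uIcc_self, Set.mem_singleton_iff] at hy
    rw [hy]
    exact Descend.refl v
  | @tail c x hvc hcx ih =>
    obtain ⟨g, hg, rfl, rfl⟩ := hcx
    rcases Set.uIcc_subset_uIcc_union_uIcc hy with hy | hy
    · exact ih hy
    · by_cases hyt : y = g.tail
      · exact hyt ▸ hvc
      · exact (hvc.trans (Descend.of_mem hg)).trans (hF.head_descend_of_mem_uIcc hg hy hyt)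

/-- Two children of `p` lie on opposite sides of `p`, and each subtree stays on the side of its
root, since it does not contain `p`. -/
theorem tail_mem_uIcc_of_descend (hF : NonShortenable F) (h₁ : e₁ ∈ F) (h₂ : e₂ ∈ F)
    (ht : e₁.tail = e₂.tail) (hne : e₁.head ≠ e₂.head) {x₁ x₂ : Fin n}
    (hx₁ : Descend F e₁.head x₁) (hx₂ : Descend F e₂.head x₂) : e₁.tail ∈ Set.uIcc x₁ x₂ := by
  have hsides : e₁.tail ∈ Set.uIcc e₁.head e₂.head := by
    by_contra hp
    have hne₁ := e₁.ne
    have hne₂ := e₂.ne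
    have : e₁.head ∈ Set.uIcc e₂.tail e₂.head ∨ e₂.head ∈ Set.uIcc e₁.tail e₁.head := by
      simp only [Set.mem_uIcc] at hp ⊢; omega
    rcases this with h | h
    · exact hne (hF.head_eq_of_descend_head h₂ h₁ ht.symm
        (hF.head_descend_of_mem_uIcc h₂ h (by rw [← ht]; exact hne₁.symm))).symm
    · exact hne (hF.head_eq_of_descend_head h₁ h₂ ht
        (hF.head_descend_of_mem_uIcc h₁ h (by rw [ht]; exact hne₂.symm)))
  have hp₁ : e₁.tail ∉ Set.uIcc e₁.head x₁ := fun h =>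
    hF.not_descend_tail h₁ (hF.descend_of_mem_uIcc hx₁ h)
  have hp₂ : e₁.tail ∉ Set.uIcc e₂.head x₂ := fun h =>
    hF.not_descend_tail h₂ (ht ▸ hF.descend_of_mem_uIcc hx₂ h)
  simp only [Set.mem_uIcc] at hsides hp₁ hp₂ ⊢
  omega


/-- The root path to `a` cannot enter `C`: the entering link would have its head above `e.tail`. -/
theorem notMem_of_responsible (hF : NonShortenable F) {C : Finset (Fin n)}
    (hR : Responsible F e C) (ha : Descend F a e.tail) : a ∉ C := fun haC => by
  obtain ⟨g, hg, hgt, hgh, -, hga⟩ :=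
    (hF.descend_zero a).exists_entering (· ∈ C) hR.1.zero_notMem haC
  exact hR.2.2 g hg (hga.trans ha) ⟨hgt, hgh⟩

/-- For `x ∈ C` outside the subtree of `v`, the root path to `x` leaves the ancestors of `v` by a
link `(p, c')`. As `c'` is a sibling of the child of `p` towards `v`, `p` lies between `v` and `x`,
hence in `C`, although it is an ancestor of `u`. -/
theorem descend_of_responsible (hF : NonShortenable F) (he : e ∈ F) {C : Finset (Fin n)}
    (hR : Responsible F e C) (hx : x ∈ C) : Descend F e.head x := by
  by_contra hvx
  have hxv : ¬ Descend F x e.head := fun h => by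
    by_cases hxe : x = e.head
    · exact hvx (hxe ▸ Descend.refl _)
    · exact hF.notMem_of_responsible hR (hF.descend_tail_of_descend_head he h hxe) hx
  obtain ⟨g', hg', hp, hc', -, hc'x⟩ := (hF.descend_zero x).exists_entering
    (¬ Descend F · e.head) (not_not.2 (hF.descend_zero _)) hxv
  rw [not_not] at hp
  have hpv : g'.tail ≠ e.head := fun h => hvx (h ▸ (Descend.of_mem hg').trans hc'x)
  obtain ⟨g, hg, hgt, hgv⟩ := hp.exists_first hpv
  have hmid : g.tail ∈ Set.uIcc e.head x :=
    hF.tail_mem_uIcc_of_descend hg hg' hgt (fun h => hc' (h ▸ hgv)) hgv hc'x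
  refine hF.notMem_of_responsible hR (hgt ▸ hF.descend_tail_of_descend_head he hp hpv) ?_
  obtain ⟨α, β, -, -, rfl⟩ := hR.1
  exact Finset.mem_Icc.2
    (Set.uIcc_subset_Icc (Finset.mem_Icc.1 hR.2.1.2) (Finset.mem_Icc.1 hx) hmid)

theorem responsible_iff (hF : NonShortenable F) (he : e ∈ F) {C : Finset (Fin n)} :
    Responsible F e C ↔ IsCut C ∧ e.head ∈ C ∧ ∀ x ∈ C, Descend F e.head x := by
  refine ⟨fun hR => ⟨hR.1, hR.2.1.2, fun x => hF.descend_of_responsible he hR⟩, ?_⟩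
  rintro ⟨hC, hv, hsub⟩
  exact ⟨hC, ⟨fun ht => hF.not_descend_tail he (hsub _ ht), hv⟩,
    fun g _ hgu hcov => hF.not_descend_tail he ((hsub _ hcov.2).trans hgu)⟩

end NonShortenable

def IntersectsIn (K : Finset (Link n)) (a b : Link n) : Prop := a ∈ K ∧ b ∈ K ∧ Intersects a b

theorem Intersects.lo_mem_or_hi_mem {a b : Link n} (h : Intersects a b) {α β : Fin n}
    (hlo : a.lo ∈ Finset.Icc α β) (hhi : a.hi ∈ Finset.Icc α β) :
    b.lo ∈ Finset.Icc α β ∨ b.hi ∈ Finset.Icc α β := by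
  unfold Intersects Crossing at h
  simp only [Finset.mem_Icc] at *
  omega

theorem Link.intersects_of_crossesCut {g ℓ : Link n} (h : crossesCut ℓ (Finset.Icc g.lo g.hi)) :
    Intersects g ℓ := by
  have := g.lo_lt_hi
  have := ℓ.lo_lt_hi
  unfold crossesCut at h
  unfold Intersects Crossing
  simp only [Finset.mem_Icc] at h
  omega

section IntersectionGraph

open Relation

variable {K : Finset (Link n)} {ℓ f : Link n}

theorem mem_Icc_of_reflTransGen_intersectsIn {α β : Fin n}
    (hK : ∀ g ∈ K, ¬ crossesCut g (Finset.Icc α β)) (h : ReflTransGen (IntersectsIn K) ℓ f)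
    (hlo : ℓ.lo ∈ Finset.Icc α β) (hhi : ℓ.hi ∈ Finset.Icc α β) :
    f.lo ∈ Finset.Icc α β ∧ f.hi ∈ Finset.Icc α β := by
  induction h with
  | refl => exact ⟨hlo, hhi⟩
  | tail _ hbc ih =>
    have := hK _ hbc.2.1
    unfold crossesCut at this
    rcases hbc.2.2.lo_mem_or_hi_mem ih.1 ih.2 with h | h <;> tauto

theorem exists_mem_span_of_reflTransGen_intersectsIn (h : ReflTransGen (IntersectsIn K) ℓ f)
    (hℓ : ℓ ∈ K) {x : Fin n} (hx : min ℓ.lo f.lo ≤ x ∧ x ≤ max ℓ.hi f.hi) :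
    ∃ g ∈ K, ReflTransGen (IntersectsIn K) ℓ g ∧ g.lo ≤ x ∧ x ≤ g.hi := by
  induction h with
  | refl => exact ⟨ℓ, hℓ, .refl, by simpa using hx⟩
  | @tail b c hb hbc ih =>
    by_cases hxb : min ℓ.lo b.lo ≤ x ∧ x ≤ max ℓ.hi b.hi
    · exact ih hxb
    by_cases hxc : c.lo ≤ x ∧ x ≤ c.hi
    · exact ⟨c, hbc.2.1, hb.tail hbc, hxc⟩
    have := b.lo_lt_hi
    have := c.lo_lt_hi
    have hint := hbc.2.2
    unfold Intersects Crossing at hint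
    simp only [min_le_iff, le_max_iff] at hx hxb
    omega

end IntersectionGraph

/-- The links of `K` connected to `v` have their spans inside `[α, β]`, and these spans cover
`[α, β]`; a link of `K` with one endpoint inside would intersect one of them. -/
theorem not_crossesCut_of_connVert_mem_Icc {K : Finset (Link n)} {v α β : Fin n}
    (hα : α = v ∨ ConnVert K v α) (hβ : β = v ∨ ConnVert K v β) (hv : v ∈ Finset.Icc α β)
    (hconn : ∀ w, ConnVert K v w → w ∈ Finset.Icc α β) {ℓ : Link n} (hℓK : ℓ ∈ K) :
    ¬ crossesCut ℓ (Finset.Icc α β) := by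
  intro hcross
  suffices hreach : ∃ ℓ₀ ∈ K, ℓ₀.Incident v ∧ Relation.ReflTransGen (IntersectsIn K) ℓ₀ ℓ by
    obtain ⟨ℓ₀, hℓ₀K, hℓ₀v, hpath⟩ := hreach
    have hlo := hconn _ ⟨ℓ₀, hℓ₀K, ℓ, hℓK, hℓ₀v, Or.inl rfl, hpath⟩
    have hhi := hconn _ ⟨ℓ₀, hℓ₀K, ℓ, hℓK, hℓ₀v, Or.inr rfl, hpath⟩
    unfold crossesCut at hcross
    tauto
  obtain ⟨z, hzℓ, hzC⟩ : ∃ z, ℓ.Incident z ∧ z ∈ Finset.Icc α β := by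
    rcases hcross with ⟨h, -⟩ | ⟨-, h⟩
    exacts [⟨_, Or.inl rfl, h⟩, ⟨_, Or.inr rfl, h⟩]
  obtain ⟨w, hw, hzw⟩ : ∃ w, (w = v ∨ ConnVert K v w) ∧ z ∈ Set.uIcc v w := by
    simp only [Finset.mem_Icc] at hv hzC
    by_cases hz : z ≤ v
    · exact ⟨α, hα, Set.mem_uIcc.2 (Or.inr ⟨hzC.1, hz⟩)⟩
    · exact ⟨β, hβ, Set.mem_uIcc.2 (Or.inl ⟨(not_le.1 hz).le, hzC.2⟩)⟩
  rcases hw with rfl | ⟨ℓ₀, hℓ₀K, f, -, hℓ₀v, hfw, hpath⟩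
  · rw [Set.uIcc_self, Set.mem_singleton_iff] at hzw
    exact ⟨ℓ, hℓK, hzw ▸ hzℓ, .refl⟩
  obtain ⟨g, hgK, hg, hzg⟩ := exists_mem_span_of_reflTransGen_intersectsIn hpath hℓ₀K (x := z) (by
    have := ℓ₀.lo_lt_hi
    have := f.lo_lt_hi
    unfold Link.Incident at hℓ₀v hfw
    simp only [Set.mem_uIcc, min_le_iff, le_max_iff] at hzw ⊢
    omega)
  have hglo := hconn _ ⟨ℓ₀, hℓ₀K, g, hgK, hℓ₀v, Or.inl rfl, hg⟩
  have hghi := hconn _ ⟨ℓ₀, hℓ₀K, g, hgK, hℓ₀v, Or.inr rfl, hg⟩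
  refine ⟨ℓ₀, hℓ₀K, hℓ₀v, hg.tail ⟨hgK, hℓK, Link.intersects_of_crossesCut ?_⟩⟩
  unfold crossesCut Link.Incident at *
  simp only [Finset.mem_Icc] at *
  omega

namespace NonShortenable

variable [NeZero n] {F : Finset (DLink n)} {K : Finset (Link n)} {d : DLink n}

theorem mem_drop_of_connVert (hF : NonShortenable F) (hd : d ∈ F) {w : Fin n}
    (hw : VGood F d.head w) (hconn : ConnVert K d.head w) : d ∈ Drop F K := by
  obtain ⟨ℓ, hℓK, f, -, hℓv, hfw, hpath⟩ := hconn
  refine ⟨hd, fun C hR => ?_⟩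
  obtain ⟨⟨α, β, -, -, rfl⟩, hvC, hsub⟩ := (hF.responsible_iff hd).1 hR
  by_contra hno
  have hK : ∀ g ∈ K, ¬ crossesCut g (Finset.Icc α β) := fun g hg hc =>
    hno ⟨g, Finset.mem_filter.2 ⟨hg, hc⟩⟩
  have hℓ : ℓ.lo ∈ Finset.Icc α β ∧ ℓ.hi ∈ Finset.Icc α β := by
    have := hK ℓ hℓK
    unfold crossesCut at this
    rcases hℓv with h | h <;> rw [← h] at hvC <;> tauto
  have hf := mem_Icc_of_reflTransGen_intersectsIn hK hpath hℓ.1 hℓ.2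
  exact hw (hsub w (hfw.elim (· ▸ hf.1) (· ▸ hf.2)))

/-- The smallest interval containing `v = d.head` and the vertices connected to it would be a cut
for which `d` is responsible and which no link of `K` crosses. -/
theorem notMem_drop_of_forall_connVert (hF : NonShortenable F)
    (hS : ∀ w, ConnVert K d.head w → Descend F d.head w) : d ∉ Drop F K := by
  classical
  intro hd
  set S := insert d.head (Finset.univ.filter (ConnVert K d.head))
  have hmem : ∀ w, w ∈ S ↔ w = d.head ∨ ConnVert K d.head w := by simp [S]
  have hvS : d.head ∈ S := Finset.mem_insert_self _ _
  have hSne : S.Nonempty := ⟨_, hvS⟩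
  have hSC : ∀ w ∈ S, w ∈ Finset.Icc (S.min' hSne) (S.max' hSne) := fun w hw =>
    Finset.mem_Icc.2 ⟨S.min'_le w hw, S.le_max' w hw⟩
  have hSdesc : ∀ w ∈ S, Descend F d.head w := fun w hw =>
    ((hmem w).1 hw).elim (fun h => h ▸ Descend.refl _) (hS w)
  have hCdesc : ∀ x ∈ Finset.Icc (S.min' hSne) (S.max' hSne), Descend F d.head x := by
    intro x hx
    simp only [Finset.mem_Icc] at hx
    by_cases hxv : x ≤ d.head
    · exact hF.descend_of_mem_uIcc (hSdesc _ (S.min'_mem hSne))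
        (Set.mem_uIcc.2 (Or.inr ⟨hx.1, hxv⟩))
    · exact hF.descend_of_mem_uIcc (hSdesc _ (S.max'_mem hSne))
        (Set.mem_uIcc.2 (Or.inl ⟨(not_le.1 hxv).le, hx.2⟩))
  have hα : 0 < S.min' hSne := (Fin.pos_iff_ne_zero' _).2 fun h => hF.head_ne_zero hd.1
    (hF.eq_zero_of_descend_zero (h ▸ hSdesc _ (S.min'_mem hSne)))
  have hcut : IsCut (Finset.Icc (S.min' hSne) (S.max' hSne)) :=
    ⟨_, _, hα, S.min'_le _ hvS |>.trans (S.le_max' _ hvS), rfl⟩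
  obtain ⟨ℓ, hℓK, hℓ⟩ := Finset.filter_nonempty_iff.1
    (hd.2 _ ((hF.responsible_iff hd.1).2 ⟨hcut, hSC _ hvS, hCdesc⟩))
  exact not_crossesCut_of_connVert_mem_Icc ((hmem _).1 (S.min'_mem hSne))
    ((hmem _).1 (S.max'_mem hSne)) (hSC _ hvS) (fun w hw => hSC w ((hmem w).2 (Or.inr hw)))
    hℓK hℓ

end NonShortenable

theorem drop_iff_connected_to_good_general {n : ℕ}
    (F : Finset (DLink (n + 3))) (hF : NonShortenable F)
    (K : Finset (Link (n + 3)))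
    (d : DLink (n + 3)) (hd : d ∈ F) :
    d ∈ Drop F K ↔ ∃ w : Fin (n + 3), VGood F d.head w ∧ ConnVert K d.head w := by
  refine ⟨fun hdrop => ?_, fun ⟨w, hw, hconn⟩ => hF.mem_drop_of_connVert hd hw hconn⟩
  by_contra! hbad
  exact hF.notMem_drop_of_forall_connVert (fun w hw => by_contra fun h => hbad w h hw) hdrop

/-- for a non-shortenable directed WRAP solution `F` and
`K ⊆ L`, a directed link `(u, v) ∈ F` is contained in `Drop_F(K)` iff `v` is
connected to a `v`-good vertex in the link intersection graph `H[K]`. -/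
theorem drop_iff_connected_to_good {n : ℕ}
    (L : Finset (Link (n + 3))) (c : Link (n + 3) → ℝ)
    (F : Finset (DLink (n + 3))) (hF : NonShortenable F)
    (K : Finset (Link (n + 3))) (hK : K ⊆ L)
    (d : DLink (n + 3)) (hd : d ∈ F) :
    d ∈ Drop F K ↔ ∃ w : Fin (n + 3), VGood F d.head w ∧ ConnVert K d.head w :=
  drop_iff_connected_to_good_general F hF K d hd
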